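/- arXiv:1001.4871 — 2 statements merged into one kernel-verified Lean document; each statement's English description precedes it below -/
import Mathlib

section
/- Let Φ be a flow on ℝ^d such that DΦ_t(x) has all entries strictly positive for every x and every t > 0 (positive derivatives). Then Φ is strongly monotone: if x > y (x ≥ y componentwise and x ≠ y), then Φ_t(x) ≫ Φ_t(y) (strict inequality in every coordinate) for all t > 0. -/
open Set

/-!
Along the segment from `y` to `x`, each coordinate of `Φ_t` has derivative `DΦ_t(z) (x - y)`,
a combination of the strictly positive columns of `DΦ_t(z)` with nonnegative, not all zero,
weights `x - y`; by the mean value theorem every coordinate of `Φ_t(x) - Φ_t(y)` is positive.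
-/

theorem ContinuousLinearMap.apply_pos_of_single_pos {ι κ : Type*} [Fintype ι] [DecidableEq ι]
    (A : (ι → ℝ) →L[ℝ] (κ → ℝ)) (hA : ∀ i j, 0 < A (Pi.single j 1) i)
    {v : ι → ℝ} (hv : 0 < v) (i : κ) : 0 < A v i := by
  obtain ⟨hv_nonneg, j, hvj⟩ := Pi.lt_def.1 hv
  have hv_decomp : A v = ∑ k, v k • A (Pi.single k 1) := by
    conv_lhs => rw [← Finset.univ_sum_single v]
    simp only [map_sum, ← map_smul, ← Pi.single_smul', smul_eq_mul, mul_one]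
  rw [hv_decomp]
  simp only [Finset.sum_apply, Pi.smul_apply, smul_eq_mul]
  exact Finset.sum_pos' (fun k _ => mul_nonneg (hv_nonneg k) (hA i k).le)
    ⟨j, Finset.mem_univ j, mul_pos hvj (hA i j)⟩

theorem apply_lt_apply_of_hasFDerivAt_single_pos {ι κ : Type*} [Fintype ι] [DecidableEq ι]
    {f : (ι → ℝ) → κ → ℝ} {f' : (ι → ℝ) → (ι → ℝ) →L[ℝ] (κ → ℝ)}
    (hf : ∀ z, HasFDerivAt f (f' z) z) (hf' : ∀ z i j, 0 < f' z (Pi.single j 1) i)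
    {x y : ι → ℝ} (hyx : y < x) (i : κ) : f y i < f x i := by
  have hfi : ∀ z, HasFDerivWithinAt (fun w => f w i)
      ((ContinuousLinearMap.proj i).comp (f' z)) univ z :=
    fun z => (hasFDerivAt_pi'.1 (hf z) i).hasFDerivWithinAt
  obtain ⟨z, -, hz⟩ := domain_mvt (fun z _ => hfi z) convex_univ (mem_univ y) (mem_univ x)
  have := (f' z).apply_pos_of_single_pos (hf' z) (sub_pos.2 hyx) i
  simp only [ContinuousLinearMap.comp_apply, ContinuousLinearMap.proj_apply] at hz
  linarith

/-- If the flow `Φ` has derivative matrices with all entries strictly positive for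
`t > 0`, then it is strongly monotone: `x > y` (componentwise, `x ≠ y`) implies
`Φ_t(x) ≫ Φ_t(y)` for every `t > 0`. -/
theorem strongly_monotone_of_positive_derivatives (d : ℕ)
    (Φ : ℝ → (Fin d → ℝ) → (Fin d → ℝ))
    (D : ℝ → (Fin d → ℝ) → ((Fin d → ℝ) →L[ℝ] (Fin d → ℝ)))
    (hderiv : ∀ t > (0:ℝ), ∀ x, HasFDerivAt (Φ t) (D t x) x)
    (hpos : ∀ t > (0:ℝ), ∀ x, ∀ i j : Fin d, 0 < D t x (Pi.single j 1) i) :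
    ∀ t > (0:ℝ), ∀ x y : Fin d → ℝ,
      (∀ j, y j ≤ x j) → x ≠ y → ∀ i, Φ t y i < Φ t x i := by
  intro t ht x y hyx hxy
  exact apply_lt_apply_of_hasFDerivAt_single_pos (hderiv t ht) (hpos t ht)
    (lt_of_le_of_ne hyx hxy.symm)
end

section
/- Let p be an equilibrium of a flow Φ that is asymptotically stable from below, i.e., there exists x < p with Φ_t(x) → p as t → ∞, where Φ is strongly monotone. Then there exists a nonempty open set of initial conditions from which trajectories converge to p. Consequently, the set E_asb of equilibria asymptotically stable from below is countable. -/
open Set Filter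

/-- Key lemma: an equilibrium asymptotically stable from below has a nonempty open
basin subset. -/
theorem asb_open_basin (d : ℕ)
    (Φ : ℝ → (Fin d → ℝ) → (Fin d → ℝ))
    (hΦ0 : ∀ x, Φ 0 x = x)
    (hΦadd : ∀ s t x, Φ (s + t) x = Φ s (Φ t x))
    (hmono : ∀ t > (0:ℝ), ∀ x y : Fin d → ℝ,
      (∀ j, y j ≤ x j) → x ≠ y → ∀ i, Φ t y i < Φ t x i)
    (p : Fin d → ℝ) (hp : ∀ t, Φ t p = p)
    (hx : ∃ x : Fin d → ℝ, (∀ j, x j ≤ p j) ∧ x ≠ p ∧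
        Tendsto (fun t => Φ t x) atTop (nhds p)) :
    ∃ U : Set (Fin d → ℝ), IsOpen U ∧ U.Nonempty ∧
        ∀ z ∈ U, Tendsto (fun t => Φ t z) atTop (nhds p) := by
  obtain ⟨x, hle, hne, hconv⟩ := hx
  set y : Fin d → ℝ := Φ 1 x with hy
  have hylt : ∀ i, y i < p i := by
    intro i
    have := hmono 1 one_pos p x hle (fun h => hne h.symm) i
    rwa [hp 1] at this
  -- y's trajectory converges to p
  have hyconv : Tendsto (fun t => Φ t y) atTop (nhds p) := by
    have h1 : Tendsto (fun t : ℝ => t + 1) atTop atTop :=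
      tendsto_atTop_add_const_right _ 1 tendsto_id
    have := hconv.comp h1
    convert this using 1
    funext t
    simp only [Function.comp, hy, ← hΦadd t 1 x]
  refine ⟨{z | ∀ i, y i < z i ∧ z i < p i}, ?_, ?_, ?_⟩
  · have : {z : Fin d → ℝ | ∀ i, y i < z i ∧ z i < p i} =
        ⋂ i, ((fun z : Fin d → ℝ => z i) ⁻¹' Ioo (y i) (p i)) := by
      ext z; simp [Set.mem_iInter, Set.mem_Ioo, forall_and]
    rw [this]
    exact isOpen_iInter_of_finite fun i =>
      (isOpen_Ioo).preimage (continuous_apply i)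
  · refine ⟨fun i => (y i + p i) / 2, fun i => ?_⟩
    constructor <;> [skip; skip] <;> · have := hylt i; linarith
  · intro z hz
    rw [tendsto_pi_nhds]
    intro i
    have hlow : ∀ᶠ t in atTop, Φ t y i ≤ Φ t z i := by
      filter_upwards [eventually_gt_atTop (0:ℝ)] with t ht
      exact le_of_lt (hmono t ht z y (fun j => (hz j).1.le)
        (fun h => absurd (congrFun h i) (ne_of_gt (hz i).1)) i)
    have hhigh : ∀ᶠ t in atTop, Φ t z i ≤ p i := by
      filter_upwards [eventually_gt_atTop (0:ℝ)] with t ht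
      have := hmono t ht p z (fun j => (hz j).2.le)
        (fun h => absurd (congrFun h i) (ne_of_gt (hz i).2)) i
      rw [hp t] at this
      exact this.le
    have hylimi : Tendsto (fun t => Φ t y i) atTop (nhds (p i)) :=
      (tendsto_pi_nhds.mp hyconv) i
    exact tendsto_of_tendsto_of_tendsto_of_le_of_le' hylimi tendsto_const_nhds
      hlow hhigh

/-- For a strongly monotone flow, an equilibrium `p` which is asymptotically stable
from below has a nonempty open set of initial conditions whose trajectories converge
to `p`; consequently the set of equilibria asymptotically stable from below is
countable. -/
theorem asb_equilibria_countable (d : ℕ)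
    (Φ : ℝ → (Fin d → ℝ) → (Fin d → ℝ))
    (hΦ0 : ∀ x, Φ 0 x = x)
    (hΦadd : ∀ s t x, Φ (s + t) x = Φ s (Φ t x))
    (hΦcont : Continuous fun q : ℝ × (Fin d → ℝ) => Φ q.1 q.2)
    -- strong monotonicity:
    (hmono : ∀ t > (0:ℝ), ∀ x y : Fin d → ℝ,
      (∀ j, y j ≤ x j) → x ≠ y → ∀ i, Φ t y i < Φ t x i) :
    (∀ p : Fin d → ℝ, (∀ t, Φ t p = p) →
      (∃ x : Fin d → ℝ, (∀ j, x j ≤ p j) ∧ x ≠ p ∧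
        Tendsto (fun t => Φ t x) atTop (nhds p)) →
      ∃ U : Set (Fin d → ℝ), IsOpen U ∧ U.Nonempty ∧
        ∀ z ∈ U, Tendsto (fun t => Φ t z) atTop (nhds p)) ∧
    Set.Countable {p : Fin d → ℝ | (∀ t, Φ t p = p) ∧
      ∃ x : Fin d → ℝ, (∀ j, x j ≤ p j) ∧ x ≠ p ∧
        Tendsto (fun t => Φ t x) atTop (nhds p)} := by
  have key := asb_open_basin d Φ hΦ0 hΦadd hmono
  refine ⟨fun p hp hx => key p hp hx, ?_⟩
  set E := {p : Fin d → ℝ | (∀ t, Φ t p = p) ∧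
      ∃ x : Fin d → ℝ, (∀ j, x j ≤ p j) ∧ x ≠ p ∧
        Tendsto (fun t => Φ t x) atTop (nhds p)} with hE
  -- basins
  set B : (Fin d → ℝ) → Set (Fin d → ℝ) :=
    fun p => {z | Tendsto (fun t => Φ t z) atTop (nhds p)} with hB
  have hdisj : E.PairwiseDisjoint B := by
    intro p hpE q hqE hpq
    refine Set.disjoint_left.mpr fun z hzp hzq => hpq ?_
    exact tendsto_nhds_unique hzp hzq
  refine hdisj.countable_of_nonempty_interior fun p hpE => ?_
  obtain ⟨U, hUo, hUne, hUconv⟩ := key p hpE.1 hpE.2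
  obtain ⟨z, hz⟩ := hUne
  exact ⟨z, interior_maximal (fun w hw => hUconv w hw) hUo hz⟩
end
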